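/- Let $A$ be an abelian group whose $n$-torsion is cyclic of order $n_\pi$ for all $n$, for a fixed set of primes $\pi$. Let $S$ be a finite group and $T \le S$ an abelian subgroup of order $|T| = |T|_\pi$. Then the restriction map $\mathrm{Hom}(S,A) \to \mathrm{Hom}(T,A)$ is surjective if and only if $S' \cap T = \{1\}$, where $S'$ is the derived subgroup of $S$. -/

import Mathlib

set_option linter.unusedSectionVars false

/-- The `n`-torsion subgroup `{a | a^n = 1}` of an abelian group `A`. -/
def nTorsion (A : Type*) [CommGroup A] (n : ℕ) : Subgroup A where
  carrier := {a | a ^ n = 1}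
  one_mem' := one_pow n
  mul_mem' := by
    intro a b ha hb
    simp only [Set.mem_setOf_eq] at *
    rw [mul_pow, ha, hb, one_mul]
  inv_mem' := by
    intro a ha
    simp only [Set.mem_setOf_eq] at *
    rw [inv_pow, ha, inv_one]

/-- The `π`-part `n_π` of a natural number `n`. -/
def piPart (π : ℕ → Prop) [DecidablePred π] (n : ℕ) : ℕ :=
  ∏ p ∈ n.primeFactors.filter π, p ^ (n.factorization p)

section NT
variable {π : ℕ → Prop} [DecidablePred π]

lemma isPi_piPart {n p : ℕ} (hp : p.Prime) (hdvd : p ∣ piPart π n) : π p := by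
  obtain ⟨q, hq, hpq⟩ := hp.prime.exists_mem_finset_dvd hdvd
  simp only [Finset.mem_filter, Nat.mem_primeFactors] at hq
  have h2 := (Nat.prime_dvd_prime_iff_eq hp hq.1.1).mp (hp.dvd_of_dvd_pow hpq)
  exact h2 ▸ hq.2

lemma piPart_eq_self {n : ℕ} (hn : n ≠ 0) (h : ∀ p, p.Prime → p ∣ n → π p) :
    piPart π n = n := by
  have hfil : n.primeFactors.filter π = n.primeFactors := by
    apply Finset.filter_true_of_mem
    intro p hp
    exact h p (Nat.prime_of_mem_primeFactors hp) (Nat.dvd_of_mem_primeFactors hp)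
  rw [piPart, hfil, ← Nat.support_factorization]
  exact Nat.factorization_prod_pow_eq_self hn

/-- The product of the non-`π` prime powers in `n`. -/
def coPiPart (π : ℕ → Prop) [DecidablePred π] (n : ℕ) : ℕ :=
  ∏ p ∈ n.primeFactors.filter (fun p => ¬ π p), p ^ (n.factorization p)

lemma notPi_coPiPart {n p : ℕ} (hp : p.Prime) (hdvd : p ∣ coPiPart π n) : ¬ π p := by
  obtain ⟨q, hq, hpq⟩ := hp.prime.exists_mem_finset_dvd hdvd
  simp only [Finset.mem_filter, Nat.mem_primeFactors] at hq
  have h2 := (Nat.prime_dvd_prime_iff_eq hp hq.1.1).mp (hp.dvd_of_dvd_pow hpq)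
  exact h2 ▸ hq.2

lemma piPart_mul_coPiPart {n : ℕ} (hn : n ≠ 0) : piPart π n * coPiPart π n = n := by
  rw [piPart, coPiPart, Finset.prod_filter_mul_prod_filter_not, ← Nat.support_factorization]
  exact Nat.factorization_prod_pow_eq_self hn

lemma dvd_piPart {n d : ℕ} (hn : n ≠ 0) (hdn : d ∣ n)
    (hd : ∀ p, p.Prime → p ∣ d → π p) : d ∣ piPart π n := by
  have hco : Nat.Coprime d (coPiPart π n) := by
    by_contra h
    obtain ⟨p, hp, h1, h2⟩ := Nat.Prime.not_coprime_iff_dvd.mp h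
    exact notPi_coPiPart hp h2 (hd p hp h1)
  refine (Nat.Coprime.dvd_of_dvd_mul_right hco ?_)
  rwa [piPart_mul_coPiPart hn]

lemma coprime_piPart_coPiPart {n : ℕ} : Nat.Coprime (piPart π n) (coPiPart π n) := by
  by_contra h
  obtain ⟨p, hp, h1, h2⟩ := Nat.Prime.not_coprime_iff_dvd.mp h
  exact notPi_coPiPart hp h2 (isPi_piPart hp h1)

end NT

lemma mem_nTorsion_iff {A : Type*} [CommGroup A] {n : ℕ} {a : A} :
    a ∈ nTorsion A n ↔ a ^ n = 1 := Iff.rfl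

section RootLemma
variable {A : Type*} [CommGroup A] {π : ℕ → Prop} [DecidablePred π]

/-- In `A`, every element of `π`-order has `k`-th roots for every `π`-number `k`. -/
lemma exists_root
    (hA : ∀ n : ℕ, 0 < n → IsCyclic (nTorsion A n) ∧ Nat.card (nTorsion A n) = piPart π n)
    {k m : ℕ} (hk : 0 < k) (hm : 0 < m)
    (hπk : ∀ p, p.Prime → p ∣ k → π p) (hπm : ∀ p, p.Prime → p ∣ m → π p)
    {a : A} (ha : a ^ m = 1) : ∃ b : A, b ^ k = a := by
  have hn : 0 < m * k := Nat.mul_pos hm hk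
  obtain ⟨hcyc, hcard⟩ := hA (m * k) hn
  have hπmk : ∀ p, p.Prime → p ∣ m * k → π p := by
    intro p hp hdvd
    rcases (Nat.Prime.dvd_mul hp).mp hdvd with h | h
    · exact hπm p hp h
    · exact hπk p hp h
  rw [piPart_eq_self hn.ne' hπmk] at hcard
  have hfin : Finite (nTorsion A (m * k)) :=
    (Nat.card_pos_iff.mp (by rw [hcard]; exact hn)).2
  obtain ⟨c, hc⟩ := hcyc.exists_generator
  have hct : Subgroup.zpowers c = ⊤ := by
    rw [Subgroup.eq_top_iff']
    exact hc
  have hordc : orderOf (c : A) = m * k := by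
    rw [Subgroup.orderOf_coe, ← Nat.card_zpowers, hct, Subgroup.card_top]
    exact hcard
  have hordck : orderOf ((c : A) ^ k) = m := by
    rw [orderOf_pow' _ hk.ne', hordc, Nat.gcd_eq_right (dvd_mul_left k m)]
    rw [mul_comm m k]
    exact Nat.mul_div_cancel_left m hk
  obtain ⟨hcycm, hcardm⟩ := hA m hm
  rw [piPart_eq_self hm.ne' hπm] at hcardm
  have hfinm : Finite (nTorsion A m) := (Nat.card_pos_iff.mp (by rw [hcardm]; exact hm)).2
  have hle : Subgroup.zpowers ((c : A) ^ k) ≤ nTorsion A m := by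
    rw [Subgroup.zpowers_le, mem_nTorsion_iff, ← pow_mul, mul_comm k m]
    have h1 := pow_orderOf_eq_one ((c : A))
    rwa [hordc] at h1
  have heq : Subgroup.zpowers ((c : A) ^ k) = nTorsion A m := by
    apply Subgroup.eq_of_le_of_card_ge hle
    rw [hcardm, Nat.card_zpowers, hordck]
  have hamem : a ∈ Subgroup.zpowers ((c : A) ^ k) := by
    rw [heq]; exact ha
  obtain ⟨i, hi⟩ := hamem
  refine ⟨(c : A) ^ i, ?_⟩
  rw [← zpow_natCast ((c : A) ^ i) k, ← zpow_mul, mul_comm i (k : ℤ), zpow_mul, zpow_natCast]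
  exact hi

end RootLemma

/-- Factoring a homomorphism through the range of another one. -/
lemma hom_factor {P G' A' : Type*} [Group P] [Group G'] [Group A']
    (ψ : P →* G') (φ : P →* A') (h : ψ.ker ≤ φ.ker) :
    ∃ χ : ψ.range →* A', ∀ p : P, χ ⟨ψ p, ⟨p, rfl⟩⟩ = φ p := by
  have hs : Function.Surjective ψ.rangeRestrict := ψ.rangeRestrict_surjective
  have hker : ∀ p ∈ ψ.rangeRestrict.ker, φ p = 1 := by
    intro p hp
    rw [MonoidHom.ker_rangeRestrict] at hp
    exact h hp
  refine ⟨(QuotientGroup.lift _ φ hker).comp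
    (QuotientGroup.quotientKerEquivOfSurjective ψ.rangeRestrict hs).symm.toMonoidHom, ?_⟩
  intro p
  have h1 : (QuotientGroup.quotientKerEquivOfSurjective ψ.rangeRestrict hs).symm
      (⟨ψ p, ⟨p, rfl⟩⟩ : ψ.range) = QuotientGroup.mk p := by
    rw [MulEquiv.symm_apply_eq]
    rfl
  simp [h1]
  rfl

section Ext
variable {A G : Type*} [CommGroup A] [CommGroup G] [Finite G] {π : ℕ → Prop} [DecidablePred π]

lemma extend_step
    (hroot : ∀ (k m : ℕ), 0 < k → 0 < m →
      (∀ p, p.Prime → p ∣ k → π p) → (∀ p, p.Prime → p ∣ m → π p) →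
      ∀ a : A, a ^ m = 1 → ∃ b : A, b ^ k = a)
    (hord : ∀ y : G, ∀ p, p.Prime → p ∣ orderOf y → π p)
    (K : Subgroup G) (g : K →* A) (x : G) (hx : x ∉ K) :
    ∃ (K' : Subgroup G) (hle : K ≤ K') (g' : K' →* A),
      Nat.card K < Nat.card K' ∧ ∀ y (hy : y ∈ K), g' ⟨y, hle hy⟩ = g ⟨y, hy⟩ := by
  set k : ℕ := orderOf ((x : G ⧸ K)) with hkdef
  have hk : 0 < k := orderOf_pos _
  have hkdvd : k ∣ orderOf x := orderOf_map_dvd (QuotientGroup.mk' K) x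
  have hxk : x ^ k ∈ K := by
    rw [← QuotientGroup.eq_one_iff]
    have : ((QuotientGroup.mk (x ^ k) : G ⧸ K)) = (x : G ⧸ K) ^ k := rfl
    rw [this, pow_orderOf_eq_one]
  set u : K := ⟨x ^ k, hxk⟩ with hu
  set a : A := g u with hadef
  have hau : a ^ orderOf u = 1 := by
    rw [hadef, ← map_pow, pow_orderOf_eq_one, map_one]
  have hupos : 0 < orderOf u := orderOf_pos u
  have hmpos : 0 < orderOf a := by
    refine Nat.pos_of_ne_zero fun h0 => ?_
    have h1 := orderOf_dvd_of_pow_eq_one hau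
    rw [h0] at h1
    exact hupos.ne' (Nat.eq_zero_of_zero_dvd h1)
  have hadvd : orderOf a ∣ orderOf x := by
    calc orderOf a ∣ orderOf u := orderOf_dvd_of_pow_eq_one hau
    _ = orderOf (x ^ k) := (Subgroup.orderOf_coe u).symm
    _ ∣ orderOf x := orderOf_pow_dvd k
  obtain ⟨b, hb⟩ := hroot k (orderOf a) hk hmpos
    (fun p hp hpk => hord x p hp (hpk.trans hkdvd))
    (fun p hp hpm => hord x p hp (hpm.trans hadvd))
    a (pow_orderOf_eq_one a)
  set ψ : K × Multiplicative ℤ →* G :=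
    (K.subtype.comp (MonoidHom.fst K (Multiplicative ℤ))) *
    ((zpowersHom G x).comp (MonoidHom.snd K (Multiplicative ℤ))) with hψ
  set φ : K × Multiplicative ℤ →* A :=
    (g.comp (MonoidHom.fst K (Multiplicative ℤ))) *
    ((zpowersHom A b).comp (MonoidHom.snd K (Multiplicative ℤ))) with hφ
  have hψ_apply : ∀ h : K, ∀ w : Multiplicative ℤ, ψ (h, w) = (h : G) * x ^ (w.toAdd) := by
    intro h w; rfl
  have hφ_apply : ∀ h : K, ∀ w : Multiplicative ℤ, φ (h, w) = g h * b ^ (w.toAdd) := by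
    intro h w; rfl
  have hker : ψ.ker ≤ φ.ker := by
    rintro ⟨h, w⟩ hmem
    rw [MonoidHom.mem_ker, hψ_apply] at hmem
    have hdvd : (k : ℤ) ∣ w.toAdd := by
      rw [hkdef, orderOf_dvd_iff_zpow_eq_one]
      have h1 : ((x : G ⧸ K)) ^ w.toAdd = QuotientGroup.mk (x ^ w.toAdd) :=
        (map_zpow (QuotientGroup.mk' K) x w.toAdd).symm
      rw [h1, QuotientGroup.eq_one_iff]
      have h2 : x ^ w.toAdd = (h : G)⁻¹ := by
        rw [eq_inv_iff_mul_eq_one, mul_comm]; exact hmem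
      rw [h2]
      exact K.inv_mem h.2
    obtain ⟨j, hj⟩ := hdvd
    have huj : h * u ^ j = 1 := by
      apply Subtype.ext
      show ((h * u ^ j : K) : G) = 1
      push_cast
      show (h : G) * (x ^ k) ^ j = 1
      rw [← zpow_natCast x k, ← zpow_mul, ← hj]
      exact hmem
    rw [MonoidHom.mem_ker, hφ_apply, hj]
    have hbkj : b ^ ((k : ℤ) * j) = g (u ^ j) := by
      rw [zpow_mul, zpow_natCast, hb, hadef, ← map_zpow]
    rw [hbkj, ← map_mul, huj, map_one]
  obtain ⟨χ, hχ⟩ := hom_factor ψ φ hker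
  have hle : K ≤ ψ.range := by
    intro y hy
    refine ⟨(⟨y, hy⟩, 1), ?_⟩
    rw [hψ_apply]
    simp
  have hxmem : x ∈ ψ.range := by
    refine ⟨(1, Multiplicative.ofAdd 1), ?_⟩
    rw [hψ_apply]
    simp
  refine ⟨ψ.range, hle, χ, ?_, ?_⟩
  · rcases lt_or_ge (Nat.card K) (Nat.card ψ.range) with h | h
    · exact h
    · exact absurd (Subgroup.eq_of_le_of_card_ge hle h ▸ hxmem) hx
  · intro y hy
    have h1 := hχ (⟨y, hy⟩, 1)
    have h2 : ψ (⟨y, hy⟩, 1) = y := by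
      rw [hψ_apply]; simp
    have h3 : (⟨y, hle hy⟩ : ψ.range) = ⟨ψ (⟨y, hy⟩, 1), ⟨_, rfl⟩⟩ :=
      Subtype.ext h2.symm
    rw [h3, h1, hφ_apply]
    simp

lemma extend_hom
    (hroot : ∀ (k m : ℕ), 0 < k → 0 < m →
      (∀ p, p.Prime → p ∣ k → π p) → (∀ p, p.Prime → p ∣ m → π p) →
      ∀ a : A, a ^ m = 1 → ∃ b : A, b ^ k = a)
    (hord : ∀ y : G, ∀ p, p.Prime → p ∣ orderOf y → π p)
    (K : Subgroup G) (g : K →* A) :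
    ∃ g' : G →* A, ∀ y (hy : y ∈ K), g' y = g ⟨y, hy⟩ := by
  obtain ⟨n, hn⟩ : ∃ n, Nat.card G - Nat.card K ≤ n := ⟨_, le_rfl⟩
  induction n generalizing K g with
  | zero =>
    have hK : K = ⊤ := Subgroup.eq_top_of_le_card K (Nat.sub_eq_zero_iff_le.mp (Nat.le_zero.mp hn))
    subst hK
    refine ⟨g.comp (Subgroup.topEquiv).symm.toMonoidHom, fun y hy => ?_⟩
    show g ((Subgroup.topEquiv).symm y) = g ⟨y, hy⟩
    congr 1
  | succ n ih =>
    by_cases hK : K = ⊤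
    · subst hK
      refine ⟨g.comp (Subgroup.topEquiv).symm.toMonoidHom, fun y hy => ?_⟩
      show g ((Subgroup.topEquiv).symm y) = g ⟨y, hy⟩
      congr 1
    · obtain ⟨x, hx⟩ : ∃ x, x ∉ K := by
        by_contra h
        push_neg at h
        exact hK (Subgroup.eq_top_iff' K |>.mpr h)
      obtain ⟨K', hle, g₁, hcard, hg₁⟩ := extend_step hroot hord K g x hx
      have hcard' : Nat.card G - Nat.card K' ≤ n := by
        have h1 : Nat.card K' ≤ Nat.card G :=
          Nat.card_le_card_of_injective (K'.subtype : ↥K' → G) (Subgroup.subtype_injective K')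
        omega
      obtain ⟨g', hg'⟩ := ih K' g₁ hcard'
      exact ⟨g', fun y hy => by rw [hg' y (hle hy), hg₁ y hy]⟩

/-- Separation of points by characters into `A`. -/
lemma sep_char
    (hA : ∀ n : ℕ, 0 < n → IsCyclic (nTorsion A n) ∧ Nat.card (nTorsion A n) = piPart π n)
    (hord : ∀ y : G, ∀ p, p.Prime → p ∣ orderOf y → π p)
    (x : G) (hx : x ≠ 1) : ∃ f : G →* A, f x ≠ 1 := by
  have hroot : ∀ (k m : ℕ), 0 < k → 0 < m →
      (∀ p, p.Prime → p ∣ k → π p) → (∀ p, p.Prime → p ∣ m → π p) →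
      ∀ a : A, a ^ m = 1 → ∃ b : A, b ^ k = a :=
    fun k m hk hm hπk hπm a ha => exists_root hA hk hm hπk hπm ha
  have hn : 0 < orderOf x := orderOf_pos x
  have hn1 : orderOf x ≠ 1 := fun h => hx (orderOf_eq_one_iff.mp h)
  obtain ⟨hcyc, hcard⟩ := hA (orderOf x) hn
  rw [piPart_eq_self hn.ne' (hord x)] at hcard
  have hfin : Finite (nTorsion A (orderOf x)) :=
    (Nat.card_pos_iff.mp (by rw [hcard]; exact hn)).2
  obtain ⟨c, hc⟩ := hcyc.exists_generator
  have hct : Subgroup.zpowers c = ⊤ := by rw [Subgroup.eq_top_iff']; exact hc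
  have hordc : orderOf ((c : A)) = orderOf x := by
    rw [Subgroup.orderOf_coe, ← Nat.card_zpowers, hct, Subgroup.card_top]
    exact hcard
  have hcne : (c : A) ≠ 1 := by
    intro h
    apply hn1
    rw [← hordc, h, orderOf_one]
  have hker : (zpowersHom G x).ker ≤ (zpowersHom A (c : A)).ker := by
    intro w hw
    rw [MonoidHom.mem_ker] at hw ⊢
    have h1 : x ^ w.toAdd = 1 := hw
    show (c : A) ^ w.toAdd = 1
    rw [← orderOf_dvd_iff_zpow_eq_one] at h1 ⊢
    rwa [hordc]
  obtain ⟨χ, hχ⟩ := hom_factor (zpowersHom G x) (zpowersHom A (c : A)) hker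
  obtain ⟨f, hf⟩ := extend_hom hroot hord (zpowersHom G x).range χ
  have hxmem : x ∈ (zpowersHom G x).range := ⟨Multiplicative.ofAdd 1, by simp⟩
  refine ⟨f, ?_⟩
  rw [hf x hxmem]
  have h2 : zpowersHom G x (Multiplicative.ofAdd 1) = x := by simp
  have h3 : (⟨x, hxmem⟩ : (zpowersHom G x).range) =
      ⟨zpowersHom G x (Multiplicative.ofAdd 1), ⟨_, rfl⟩⟩ := Subtype.ext h2.symm
  rw [h3, hχ (Multiplicative.ofAdd 1)]
  show (c : A) ^ ((Multiplicative.ofAdd (1 : ℤ)).toAdd) ≠ 1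
  simpa using hcne

end Ext

/-- Proposition 10.5(e): if for every `n` the `n`-torsion of `A` is cyclic of order `n_π`,
`S` is a finite group and `T ≤ S` is an abelian subgroup with `|T| = |T|_π`, then the
restriction map `Hom(S,A) → Hom(T,A)` is surjective iff `S' ∩ T = 1`. -/
theorem restriction_surjective_iff {A S : Type*} [CommGroup A] [Group S] [Finite S]
    (π : ℕ → Prop) [DecidablePred π] (hπ : ∀ p, π p → p.Prime)
    (hA : ∀ n : ℕ, 0 < n → IsCyclic (nTorsion A n) ∧ Nat.card (nTorsion A n) = piPart π n)
    (T : Subgroup S) (hTab : ∀ x ∈ T, ∀ y ∈ T, x * y = y * x)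
    (hTpi : Nat.card T = piPart π (Nat.card T)) :
    (∀ f : T →* A, ∃ g : S →* A, ∀ t : T, g t = f t) ↔ commutator S ⊓ T = ⊥ := by
  letI : CommGroup ↥T :=
    { (inferInstance : Group ↥T) with
      mul_comm := fun a b => Subtype.ext (hTab a a.2 b b.2) }
  have hroot : ∀ (k m : ℕ), 0 < k → 0 < m →
      (∀ p, p.Prime → p ∣ k → π p) → (∀ p, p.Prime → p ∣ m → π p) →
      ∀ a : A, a ^ m = 1 → ∃ b : A, b ^ k = a :=
    fun k m hk hm hπk hπm a ha => exists_root hA hk hm hπk hπm ha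
  have hcardTpos : 0 < Nat.card ↥T := Nat.card_pos
  have hordT : ∀ y : ↥T, ∀ p, p.Prime → p ∣ orderOf y → π p := by
    intro y p hp hdvd
    have h1 : orderOf y ∣ Nat.card ↥T := orderOf_dvd_natCard y
    have h2 : p ∣ piPart π (Nat.card ↥T) := hTpi ▸ (hdvd.trans h1)
    exact isPi_piPart hp h2
  constructor
  · -- surjectivity implies trivial intersection
    intro hsurj
    rw [Subgroup.eq_bot_iff_forall]
    intro x hxmem
    obtain ⟨hxc, hxT⟩ := Subgroup.mem_inf.mp hxmem
    by_contra hx1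
    obtain ⟨f, hf⟩ := sep_char hA hordT (⟨x, hxT⟩ : ↥T) (fun h => hx1 (congrArg Subtype.val h))
    obtain ⟨g, hg⟩ := hsurj f
    have hker : commutator S ≤ g.ker := by
      rw [commutator_def, Subgroup.commutator_le]
      intro a _ b _
      rw [MonoidHom.mem_ker, map_commutatorElement]
      exact commutatorElement_eq_one_iff_commute.mpr (mul_comm _ _)
    have : g x = 1 := hker hxc
    rw [hg ⟨x, hxT⟩] at this
    exact hf this
  · -- trivial intersection implies surjectivity
    intro hST f
    set G := Abelianization S
    set φ : S →* G := Abelianization.of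
    have hGfin : Finite G := inferInstance
    set N : ℕ := Nat.card G with hN
    have hNpos : 0 < N := Nat.card_pos
    set m' : ℕ := piPart π N with hm'
    have hm'dvdN : m' ∣ N := Dvd.intro _ (piPart_mul_coPiPart hNpos.ne')
    have hm'pos : 0 < m' := Nat.pos_of_dvd_of_pos (by exact hm'dvdN) hNpos
    -- the restriction of φ to T is injective
    set ψ : ↥T →* G := φ.comp T.subtype with hψ
    have hψinj : Function.Injective ψ := by
      rw [injective_iff_map_eq_one]
      intro t ht
      have h1 : (t : S) ∈ commutator S := by
        rw [← QuotientGroup.eq_one_iff]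
        exact ht
      have h2 : (t : S) ∈ commutator S ⊓ T := ⟨h1, t.2⟩
      rw [hST, Subgroup.mem_bot] at h2
      exact Subtype.ext h2
    set e : ↥T ≃* ψ.range := MonoidHom.ofInjective hψinj with he
    have hcardH : Nat.card ψ.range = Nat.card ↥T := (Nat.card_congr e.toEquiv).symm
    have hHdvd : Nat.card ψ.range ∣ N := Subgroup.card_subgroup_dvd_card ψ.range
    have hTdvd : Nat.card ↥T ∣ N := hcardH ▸ hHdvd
    have hTpiN : ∀ p, p.Prime → p ∣ Nat.card ↥T → π p := by
      intro p hp hdvd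
      exact isPi_piPart hp (hTpi ▸ hdvd)
    have hTm' : Nat.card ↥T ∣ m' := dvd_piPart hNpos.ne' hTdvd hTpiN
    -- the π-torsion subgroup of G
    set K₀ : Subgroup G := nTorsion G m' with hK₀
    have hmemK₀ : ∀ y ∈ ψ.range, y ∈ K₀ := by
      intro y hy
      have h1 : y ^ Nat.card ψ.range = 1 := by
        have := pow_card_eq_one' (G := ψ.range) (x := ⟨y, hy⟩)
        exact congrArg Subtype.val this
      rw [hcardH] at h1
      obtain ⟨d, hd⟩ := hTm'
      rw [mem_nTorsion_iff, hd, pow_mul, h1, one_pow]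
    have hHK₀ : ψ.range ≤ K₀ := hmemK₀
    have hordK₀ : ∀ z : ↥K₀, ∀ p, p.Prime → p ∣ orderOf z → π p := by
      intro z p hp hdvd
      have h1 : z ^ m' = 1 := by
        apply Subtype.ext
        exact z.2
      have h2 : orderOf z ∣ m' := orderOf_dvd_of_pow_eq_one h1
      exact isPi_piPart hp ((hdvd.trans h2).trans dvd_rfl)
    -- transfer f to a hom on the subgroup of K₀
    set f' : (ψ.range.subgroupOf K₀) →* A :=
      f.comp (e.symm.toMonoidHom.comp (Subgroup.subgroupOfEquivOfLe hHK₀).toMonoidHom) with hf'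
    obtain ⟨g₀, hg₀⟩ := extend_hom hroot hordK₀ (ψ.range.subgroupOf K₀) f'
    -- the power map into K₀
    have hcop : Nat.Coprime m' (coPiPart π N) := coprime_piPart_coPiPart
    obtain ⟨c, hc1, hc2⟩ := Nat.chineseRemainder hcop 1 0
    have hcoprod : m' * coPiPart π N = N := piPart_mul_coPiPart hNpos.ne'
    obtain ⟨t0, ht0⟩ : (coPiPart π N : ℕ) ∣ c := (Nat.modEq_zero_iff_dvd).mp hc2
    have h6 : c * m' = N * t0 := by
      calc c * m' = (m' * coPiPart π N) * t0 := by rw [ht0]; ring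
      _ = N * t0 := by rw [hcoprod]
    have hpowmem : ∀ y : G, y ^ c ∈ K₀ := by
      intro y
      rw [mem_nTorsion_iff, ← pow_mul, h6, hN, pow_mul, pow_card_eq_one', one_pow]
    set pc : G →* ↥K₀ := (powMonoidHom c : G →* G).codRestrict K₀ hpowmem with hpc
    refine ⟨(g₀.comp pc).comp φ, ?_⟩
    intro t
    have hyH : ψ t ∈ ψ.range := ⟨t, rfl⟩
    have hyc : (ψ t) ^ c = ψ t := by
      have hord1 : orderOf (ψ t) ∣ Nat.card ↥T := by
        have h1 : orderOf ((⟨ψ t, hyH⟩ : ψ.range)) ∣ Nat.card ψ.range := orderOf_dvd_natCard _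
        rw [hcardH] at h1
        rwa [Subgroup.orderOf_mk] at h1
      have hmod : c ≡ 1 [MOD orderOf (ψ t)] :=
        (Nat.ModEq.of_dvd (hord1.trans hTm') hc1)
      calc (ψ t) ^ c = (ψ t) ^ 1 := pow_eq_pow_iff_modEq.mpr hmod
      _ = ψ t := pow_one _
    have hpct : pc (ψ t) = ⟨ψ t, hmemK₀ _ hyH⟩ := by
      apply Subtype.ext
      show (ψ t) ^ c = ψ t
      exact hyc
    have hmem' : (⟨ψ t, hmemK₀ _ hyH⟩ : ↥K₀) ∈ ψ.range.subgroupOf K₀ := by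
      rw [Subgroup.mem_subgroupOf]
      exact hyH
    have step1 : ((g₀.comp pc).comp φ) (t : S) = g₀ (pc (ψ t)) := rfl
    rw [step1, hpct, hg₀ _ hmem', hf']
    simp only [MonoidHom.comp_apply, MulEquiv.coe_toMonoidHom]
    have h4 : (Subgroup.subgroupOfEquivOfLe hHK₀) ⟨⟨ψ t, hmemK₀ _ hyH⟩, hmem'⟩
        = ⟨ψ t, hyH⟩ := rfl
    rw [h4]
    have h5 : e t = ⟨ψ t, hyH⟩ := by
      apply Subtype.ext
      rfl
    rw [← h5, MulEquiv.symm_apply_apply]
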